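/- arXiv:1307.1770 — 3 statements merged into one kernel-verified Lean document; each statement's English description precedes it below -/
import Mathlib

section
/- Let Φ ∈ ℝ^{M×N} with columns φ_j, and let x ∈ ℝ^N have support T with |T| = K. Set y = Φx. Let T^b ⊆ {1,…,N} be an index set with n_c = |T^b ∩ T| < K and n_f = |T^b \ T|, and let r^b = y − Φ_{T^b} x̂, where x̂ minimizes ‖y − Φ_{T^b} z‖₂ over z ∈ ℝ^{|T^b|} (the residue of the orthogonal projection of y onto the column span of Φ_{T^b}). Let B be a positive integer with K+n_f+B ≤ N, and let ΔT be a set of B indices maximizing Σ_{j∈J} ⟨φ_j, r^b⟩² over all J ⊆ {1,…,N} with |J| = B. If the restricted isometry constant of Φ satisfies δ_{K+n_f+B} < min( √B/(√(K−n_c)+√B), 1/2 ), then ΔT ∩ (T \ T^b) ≠ ∅. -/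
open scoped BigOperators
open Matrix

/-- Euclidean norm of a finite-dimensional real vector. -/
noncomputable def enorm {ι : Type*} [Fintype ι] (v : ι → ℝ) : ℝ :=
  Real.sqrt (∑ i, v i ^ 2)

/-- `x` has at most `L` nonzero entries. -/
def SparseLe {N : ℕ} (L : ℕ) (x : Fin N → ℝ) : Prop :=
  (Finset.univ.filter fun i => x i ≠ 0).card ≤ L

/-- The restricted isometry constant of order `L`: the smallest `δ ≥ 0` such that
`(1-δ)‖x‖² ≤ ‖Φx‖² ≤ (1+δ)‖x‖²` for all `x` with at most `L` nonzero entries. -/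
noncomputable def RIC {M N : ℕ} (Φ : Matrix (Fin M) (Fin N) ℝ) (L : ℕ) : ℝ :=
  sInf {δ : ℝ | 0 ≤ δ ∧ ∀ x : Fin N → ℝ, SparseLe L x →
    (1 - δ) * ∑ i, x i ^ 2 ≤ ∑ i, (Φ.mulVec x) i ^ 2 ∧
      ∑ i, (Φ.mulVec x) i ^ 2 ≤ (1 + δ) * ∑ i, x i ^ 2}

/-- The column submatrix of `Φ` with columns indexed by the finite set `I`. -/
def colSub {M N : ℕ} (Φ : Matrix (Fin M) (Fin N) ℝ) (I : Finset (Fin N)) :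
    Matrix (Fin M) {j // j ∈ I} ℝ :=
  Matrix.of fun i j => Φ i j.val

/-!
Write the residual as `rb = Φ u` with `u = x - x̂` supported on `T ∪ Tb`, and let `c = Φᵀ rb`
collect the correlations `⟨φ_j, rb⟩`. Least-squares optimality of `x̂` makes `c` vanish on `Tb`.
If `ΔT` missed `W = T \ Tb`, then with `δ = δ_{K+n_f+B}`:
* the lower RIP bound and Cauchy–Schwarz give `(1 - δ)² ‖u‖² ≤ ∑_{j ∈ W} c_j²`;
* `ΔT \ Tb` is disjoint from the support of `u`, and RIP makes disjointly supported vectors nearly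
  orthogonal, so `∑_{j ∈ ΔT} c_j² ≤ δ² ‖u‖²`;
* `ΔT` is a best `B`-set, so `B ∑_{j ∈ W} c_j² ≤ max(B, |W|) ∑_{j ∈ ΔT} c_j²`.
Hence `B (1 - δ)² ≤ max(B, |W|) δ²`, i.e. `δ ≥ min(√B / (√|W| + √B), 1/2)` with `|W| = K - n_c`.
-/

lemma sum_sq_eq_dotProduct {ι : Type*} [Fintype ι] (v : ι → ℝ) : ∑ i, v i ^ 2 = v ⬝ᵥ v := by
  simp only [dotProduct, sq]

lemma enorm_eq_sqrt_dotProduct {ι : Type*} [Fintype ι] (v : ι → ℝ) :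
    _root_.enorm v = Real.sqrt (v ⬝ᵥ v) := by
  rw [_root_.enorm, sum_sq_eq_dotProduct]

lemma dotProduct_self_nonneg {ι : Type*} [Fintype ι] (v : ι → ℝ) : 0 ≤ v ⬝ᵥ v :=
  Finset.sum_nonneg fun i _ => mul_self_nonneg (v i)

lemma dotProduct_self_pos {ι : Type*} [Fintype ι] {v : ι → ℝ} (hv : v ≠ 0) : 0 < v ⬝ᵥ v :=
  (dotProduct_self_nonneg v).lt_of_ne' (mt dotProduct_self_eq_zero.mp hv)

lemma SparseLe.of_forall_notMem {N L : ℕ} {x : Fin N → ℝ} (s : Finset (Fin N)) (hs : s.card ≤ L)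
    (hx : ∀ j ∉ s, x j = 0) : SparseLe L x :=
  (Finset.card_le_card fun j hj => by
    by_contra hjs
    exact (Finset.mem_filter.mp hj).2 (hx j hjs)).trans hs

section RIC

variable {M N : ℕ} (Φ : Matrix (Fin M) (Fin N) ℝ) (L : ℕ)

lemma RIC_mem : RIC Φ L ∈ {δ : ℝ | 0 ≤ δ ∧ ∀ x : Fin N → ℝ, SparseLe L x →
    (1 - δ) * ∑ i, x i ^ 2 ≤ ∑ i, (Φ.mulVec x) i ^ 2 ∧
      ∑ i, (Φ.mulVec x) i ^ 2 ≤ (1 + δ) * ∑ i, x i ^ 2} := by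
  refine IsClosed.csInf_mem ?_ ?_ ⟨0, fun δ hδ => hδ.1⟩
  · simp only [Set.ofPred_and, Set.ofPred_forall]
    exact isClosed_Ici.inter <| isClosed_iInter fun x => isClosed_iInter fun _ =>
      (isClosed_le (by fun_prop) continuous_const).inter
        (isClosed_le continuous_const (by fun_prop))
  · -- `‖Φ‖_F² + 1` is admissible, by Cauchy–Schwarz in each row
    set F := ∑ i, ∑ j, Φ i j ^ 2
    have hF : 0 ≤ F := by positivity
    refine ⟨F + 1, by positivity, fun x _ => ⟨?_, ?_⟩⟩
    · nlinarith [show 0 ≤ ∑ i, x i ^ 2 by positivity, show 0 ≤ ∑ i, (Φ *ᵥ x) i ^ 2 by positivity]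
    · calc ∑ i, (Φ *ᵥ x) i ^ 2 ≤ ∑ i, (∑ j, Φ i j ^ 2) * ∑ j, x j ^ 2 :=
            Finset.sum_le_sum fun i _ => Finset.sum_mul_sq_le_sq_mul_sq Finset.univ (Φ i) x
        _ = F * ∑ j, x j ^ 2 := by rw [Finset.sum_mul]
        _ ≤ (1 + (F + 1)) * ∑ j, x j ^ 2 := by gcongr; linarith

lemma RIC_nonneg : 0 ≤ RIC Φ L := (RIC_mem Φ L).1

variable {Φ L}

lemma one_sub_RIC_mul_le {x : Fin N → ℝ} (hx : SparseLe L x) :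
    (1 - RIC Φ L) * (x ⬝ᵥ x) ≤ Φ *ᵥ x ⬝ᵥ Φ *ᵥ x := by
  simpa only [sum_sq_eq_dotProduct] using ((RIC_mem Φ L).2 x hx).1

lemma le_one_add_RIC_mul {x : Fin N → ℝ} (hx : SparseLe L x) :
    Φ *ᵥ x ⬝ᵥ Φ *ᵥ x ≤ (1 + RIC Φ L) * (x ⬝ᵥ x) := by
  simpa only [sum_sq_eq_dotProduct] using ((RIC_mem Φ L).2 x hx).2

lemma two_mul_dotProduct_mulVec_le_of_disjoint {u v : Fin N → ℝ} {s t : Finset (Fin N)}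
    (hst : Disjoint s t) (hL : (s ∪ t).card ≤ L) (hu : ∀ j ∉ s, u j = 0)
    (hv : ∀ j ∉ t, v j = 0) :
    2 * (Φ *ᵥ u ⬝ᵥ Φ *ᵥ v) ≤ RIC Φ L * (u ⬝ᵥ u + v ⬝ᵥ v) := by
  have huv : u ⬝ᵥ v = 0 := Finset.sum_eq_zero fun j _ => by
    by_cases hj : j ∈ s
    · rw [hv j (Finset.disjoint_left.mp hst hj), mul_zero]
    · rw [hu j hj, zero_mul]
  have hvanish : ∀ j ∉ s ∪ t, u j = 0 ∧ v j = 0 := fun j hj => by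
    rw [Finset.mem_union, not_or] at hj
    exact ⟨hu j hj.1, hv j hj.2⟩
  have hadd := le_one_add_RIC_mul (Φ := Φ) (x := u + v) <| .of_forall_notMem _ hL fun j hj => by
    simp [hvanish j hj]
  have hsub := one_sub_RIC_mul_le (Φ := Φ) (x := u - v) <| .of_forall_notMem _ hL fun j hj => by
    simp [hvanish j hj]
  simp only [mulVec_add, mulVec_sub, add_dotProduct, dotProduct_add, sub_dotProduct,
    dotProduct_sub, dotProduct_comm v u, dotProduct_comm (Φ *ᵥ v), huv] at hadd hsub
  linarith

lemma dotProduct_mulVec_le_of_disjoint {u v : Fin N → ℝ} {s t : Finset (Fin N)}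
    (hst : Disjoint s t) (hL : (s ∪ t).card ≤ L) (hu : ∀ j ∉ s, u j = 0)
    (hv : ∀ j ∉ t, v j = 0) :
    Φ *ᵥ u ⬝ᵥ Φ *ᵥ v ≤ RIC Φ L * √(u ⬝ᵥ u) * √(v ⬝ᵥ v) := by
  by_cases hu0 : u = 0
  · simp [hu0]
  by_cases hv0 : v = 0
  · simp [hv0]
  set a := √(u ⬝ᵥ u)
  set b := √(v ⬝ᵥ v)
  have ha : a ^ 2 = u ⬝ᵥ u := Real.sq_sqrt (dotProduct_self_nonneg u)
  have hb : b ^ 2 = v ⬝ᵥ v := Real.sq_sqrt (dotProduct_self_nonneg v)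
  have hab : 0 < a * b := mul_pos (Real.sqrt_pos.mpr (dotProduct_self_pos hu0))
    (Real.sqrt_pos.mpr (dotProduct_self_pos hv0))
  -- rescale `u` and `v` to equal norms
  have h := two_mul_dotProduct_mulVec_le_of_disjoint (Φ := Φ) (u := b • u) (v := a • v) hst hL
    (fun j hj => by simp [hu j hj]) (fun j hj => by simp [hv j hj])
  simp only [mulVec_smul, smul_dotProduct, dotProduct_smul, smul_eq_mul, ← ha, ← hb] at h
  nlinarith [RIC_nonneg Φ L]

end RIC

lemma vecMul_sub_mulVec_eq_zero_of_forall_enorm_le {m n : Type*} [Fintype m] [Fintype n]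
    {A : Matrix m n ℝ} {y : m → ℝ} {z₀ : n → ℝ}
    (hmin : ∀ z, _root_.enorm (y - A *ᵥ z₀) ≤ _root_.enorm (y - A *ᵥ z)) :
    (y - A *ᵥ z₀) ᵥ* A = 0 := by
  set r := y - A *ᵥ z₀
  set g := r ᵥ* A
  -- perturbing `z₀` along `g` must not decrease the residual
  have hquad : ∀ t : ℝ, 0 ≤ (A *ᵥ g ⬝ᵥ A *ᵥ g) * (t * t) + (-2 * (g ⬝ᵥ g)) * t + 0 := fun t => by
    have h := hmin (z₀ + t • g)
    rw [enorm_eq_sqrt_dotProduct, enorm_eq_sqrt_dotProduct,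
      Real.sqrt_le_sqrt_iff (dotProduct_self_nonneg _)] at h
    have hr : y - A *ᵥ (z₀ + t • g) = r - t • A *ᵥ g := by
      rw [mulVec_add, mulVec_smul, ← sub_sub]
    have hrg : r ⬝ᵥ A *ᵥ g = g ⬝ᵥ g := dotProduct_mulVec r A g
    rw [hr] at h
    simp only [sub_dotProduct, dotProduct_sub, smul_dotProduct, dotProduct_smul, smul_eq_mul,
      dotProduct_comm (A *ᵥ g) r, hrg] at h
    linarith
  have hdisc := discrim_le_zero hquad
  rw [discrim, mul_zero, sub_zero] at hdisc
  exact dotProduct_self_eq_zero.mp (by nlinarith [dotProduct_self_nonneg g])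

lemma colSub_mulVec {M N : ℕ} (Φ : Matrix (Fin M) (Fin N) ℝ) (I : Finset (Fin N))
    (z : {j // j ∈ I} → ℝ) :
    colSub Φ I *ᵥ z = Φ *ᵥ fun j => if h : j ∈ I then z ⟨j, h⟩ else 0 := by
  ext i
  change ∑ j : I, Φ i j * z j = ∑ j, Φ i j * (if h : j ∈ I then z ⟨j, h⟩ else 0)
  rw [← Finset.sum_subset (Finset.subset_univ I) fun j _ hj => by simp [hj],
    ← Finset.sum_coe_sort I]
  exact Finset.sum_congr rfl fun j _ => by simp [j.2]

section Correlation

variable {M N L : ℕ} {Φ : Matrix (Fin M) (Fin N) ℝ} {u : Fin N → ℝ} {s : Finset (Fin N)}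

lemma one_sub_RIC_sq_mul_le_sum_sq {W : Finset (Fin N)} (hL : s.card ≤ L) (hδ : RIC Φ L ≤ 1)
    (hu : ∀ j ∉ s, u j = 0) (hc : ∀ j ∈ s, j ∉ W → (Φᵀ *ᵥ (Φ *ᵥ u)) j = 0) :
    (1 - RIC Φ L) ^ 2 * (u ⬝ᵥ u) ≤ ∑ j ∈ W, (Φᵀ *ᵥ (Φ *ᵥ u)) j ^ 2 := by
  set c := Φᵀ *ᵥ (Φ *ᵥ u)
  have hlower : (1 - RIC Φ L) * (u ⬝ᵥ u) ≤ ∑ j ∈ W, u j * c j := by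
    have hW : u ⬝ᵥ c = ∑ j ∈ W, u j * c j := by
      refine (Finset.sum_subset (Finset.subset_univ W) fun j _ hjW => ?_).symm
      by_cases hjs : j ∈ s
      · rw [hc j hjs hjW, mul_zero]
      · rw [hu j hjs, zero_mul]
    rw [← hW, dotProduct_transpose_mulVec, dotProduct_comm]
    exact one_sub_RIC_mul_le (.of_forall_notMem s hL hu)
  have hCS : (∑ j ∈ W, u j * c j) ^ 2 ≤ (u ⬝ᵥ u) * ∑ j ∈ W, c j ^ 2 :=
    (Finset.sum_mul_sq_le_sq_mul_sq W u c).trans <| by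
      gcongr
      rw [← sum_sq_eq_dotProduct]
      exact Finset.sum_le_univ_sum_of_nonneg fun j => sq_nonneg (u j)
  rcases (dotProduct_self_nonneg u).eq_or_lt with hU | hU
  · rw [← hU, mul_zero]
    positivity
  · refine le_of_mul_le_mul_left ?_ hU
    nlinarith [mul_nonneg (sub_nonneg.mpr hδ) hU.le]

lemma sum_sq_le_RIC_sq_mul {S : Finset (Fin N)} (hL : (s ∪ S).card ≤ L)
    (hu : ∀ j ∉ s, u j = 0) (hc : ∀ j ∈ S, j ∈ s → (Φᵀ *ᵥ (Φ *ᵥ u)) j = 0) :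
    ∑ j ∈ S, (Φᵀ *ᵥ (Φ *ᵥ u)) j ^ 2 ≤ RIC Φ L ^ 2 * (u ⬝ᵥ u) := by
  set c := Φᵀ *ᵥ (Φ *ᵥ u)
  set A := ∑ j ∈ S, c j ^ 2
  -- test `u` against the part of `c` on `S`, which is supported on `S \ s`
  set v : Fin N → ℝ := fun j => if j ∈ S then c j else 0
  have hv : ∀ j ∉ S \ s, v j = 0 := fun j hj => by
    by_cases hjS : j ∈ S
    · simp [v, hjS, hc j hjS (by simpa [hjS] using hj)]
    · simp [v, hjS]
  have hvc : v ⬝ᵥ c = A := by simp [v, A, dotProduct, ite_mul, Finset.sum_ite_mem, sq]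
  have hvv : v ⬝ᵥ v = A := by simp [v, A, dotProduct, ite_mul, Finset.sum_ite_mem, sq]
  have hinner := dotProduct_mulVec_le_of_disjoint (Φ := Φ) (L := L) Finset.sdiff_disjoint
    (by rwa [Finset.sdiff_union_self_eq_union, Finset.union_comm]) hv hu
  rw [dotProduct_comm, ← dotProduct_transpose_mulVec, hvc, hvv] at hinner
  have hA : 0 ≤ A := by positivity
  have hsq : A ^ 2 ≤ RIC Φ L ^ 2 * A * (u ⬝ᵥ u) := by
    have := pow_le_pow_left₀ hA hinner 2
    rwa [mul_pow, mul_pow, Real.sq_sqrt hA, Real.sq_sqrt (dotProduct_self_nonneg u)] at this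
  rcases hA.eq_or_lt with hA0 | hA0
  · rw [← hA0]
    exact mul_nonneg (sq_nonneg _) (dotProduct_self_nonneg u)
  · nlinarith

end Correlation

lemma Finset.exists_subset_card_eq_mul_sum_le {α : Type*} [DecidableEq α] (W : Finset α)
    (g : α → ℝ) {B : ℕ} (hB : B ≤ W.card) :
    ∃ J ⊆ W, J.card = B ∧ (B : ℝ) * ∑ j ∈ W, g j ≤ W.card * ∑ j ∈ J, g j := by
  obtain ⟨J, hJmem, hJmax⟩ := (Finset.powersetCard B W).exists_max_image (fun J => ∑ j ∈ J, g j)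
    (Finset.powersetCard_nonempty.mpr hB)
  obtain ⟨hJW, hJcard⟩ := Finset.mem_powersetCard.mp hJmem
  refine ⟨J, hJW, hJcard, ?_⟩
  -- maximality of `J`: exchanging `j ∈ J` for `k ∈ W \ J` cannot increase the sum
  have hswap : ∀ k ∈ W \ J, ∀ j ∈ J, g k ≤ g j := fun k hk j hj => by
    obtain ⟨hkW, hkJ⟩ := Finset.mem_sdiff.mp hk
    have hk' : k ∉ J.erase j := fun h => hkJ (Finset.mem_of_mem_erase h)
    have hmem : insert k (J.erase j) ∈ Finset.powersetCard B W := by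
      refine Finset.mem_powersetCard.mpr
        ⟨Finset.insert_subset hkW ((J.erase_subset j).trans hJW), ?_⟩
      rw [Finset.card_insert_of_notMem hk', Finset.card_erase_of_mem hj, hJcard]
      have : 0 < B := hJcard ▸ Finset.card_pos.mpr ⟨j, hj⟩
      omega
    have := hJmax _ hmem
    rw [Finset.sum_insert hk', ← Finset.add_sum_erase J g hj] at this
    linarith
  have hrest : (B : ℝ) * ∑ k ∈ W \ J, g k ≤ (W \ J).card * ∑ j ∈ J, g j := by
    rw [Finset.mul_sum, ← nsmul_eq_mul, ← Finset.sum_const]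
    refine Finset.sum_le_sum fun k hk => ?_
    simpa [hJcard] using Finset.card_nsmul_le_sum J g (g k) (hswap k hk)
  have hcard : ((W \ J).card : ℝ) + B = W.card := by
    exact_mod_cast hJcard ▸ Finset.card_sdiff_add_card_eq_card hJW
  rw [← Finset.sum_sdiff hJW, ← hcard]
  linarith

lemma exists_card_eq_mul_sum_le_max_mul {α : Type*} [Fintype α] [DecidableEq α] (W : Finset α)
    {g : α → ℝ} (hg : ∀ j, 0 ≤ g j) {B : ℕ} (hB : B ≤ Fintype.card α) :
    ∃ J : Finset α, J.card = B ∧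
      (B : ℝ) * ∑ j ∈ W, g j ≤ max (B : ℝ) W.card * ∑ j ∈ J, g j := by
  rcases le_total W.card B with hWB | hBW
  · obtain ⟨J, hWJ, -, hJ⟩ := Finset.exists_subsuperset_card_eq (Finset.subset_univ W) hWB
      (by rwa [Finset.card_univ])
    refine ⟨J, hJ, ?_⟩
    rw [max_eq_left (by exact_mod_cast hWB)]
    exact mul_le_mul_of_nonneg_left
      (Finset.sum_le_sum_of_subset_of_nonneg hWJ fun j _ _ => hg j) B.cast_nonneg
  · obtain ⟨J, -, hJ, hsum⟩ := W.exists_subset_card_eq_mul_sum_le g hBW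
    exact ⟨J, hJ, by rwa [max_eq_right (by exact_mod_cast hBW)]⟩

lemma min_sqrt_div_le {δ n B : ℝ} (hδ : 0 ≤ δ) (hn : 0 ≤ n) (hB : 0 ≤ B)
    (h : B * (1 - δ) ^ 2 ≤ max B n * δ ^ 2) : min (√B / (√n + √B)) (1 / 2) ≤ δ := by
  rcases hB.eq_or_lt with rfl | hB
  · exact min_le_of_left_le (by simpa using hδ)
  rcases le_total n B with hnB | hBn
  · rw [max_eq_left hnB] at h
    refine min_le_of_right_le ?_
    nlinarith
  · rw [max_eq_right hBn] at h
    refine min_le_of_left_le ?_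
    have hsq : (√B * (1 - δ)) ^ 2 ≤ (√n * δ) ^ 2 := by
      rwa [mul_pow, mul_pow, Real.sq_sqrt hB.le, Real.sq_sqrt hn]
    have := le_of_sq_le_sq hsq (by positivity)
    rw [div_le_iff₀ (by positivity)]
    linarith

theorem min_sqrt_div_le_RIC_of_disjoint {M N L B : ℕ} {Φ : Matrix (Fin M) (Fin N) ℝ}
    {u : Fin N → ℝ} {s W Δ : Finset (Fin N)} (hu : ∀ j ∉ s, u j = 0) (hu0 : u ≠ 0)
    (hc : ∀ j ∈ s, j ∉ W → (Φᵀ *ᵥ (Φ *ᵥ u)) j = 0) (hΔW : Disjoint Δ W)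
    (hΔ : Δ.card = B) (hL : s.card + B ≤ L)
    (hmax : ∀ J : Finset (Fin N), J.card = B →
      ∑ j ∈ J, (Φᵀ *ᵥ (Φ *ᵥ u)) j ^ 2 ≤ ∑ j ∈ Δ, (Φᵀ *ᵥ (Φ *ᵥ u)) j ^ 2) :
    min (√B / (√W.card + √B)) (1 / 2) ≤ RIC Φ L := by
  set δ := RIC Φ L
  set c := Φᵀ *ᵥ (Φ *ᵥ u)
  set U := u ⬝ᵥ u
  rcases le_or_gt δ 1 with hδ | hδ
  swap
  · exact (min_le_right _ _).trans (by linarith)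
  have hlower : (1 - δ) ^ 2 * U ≤ ∑ j ∈ W, c j ^ 2 :=
    one_sub_RIC_sq_mul_le_sum_sq (by omega) hδ hu hc
  have hupper : ∑ j ∈ Δ, c j ^ 2 ≤ δ ^ 2 * U :=
    sum_sq_le_RIC_sq_mul ((Finset.card_union_le s Δ).trans (by omega)) hu
      fun j hjΔ hjs => hc j hjs (Finset.disjoint_left.mp hΔW hjΔ)
  obtain ⟨J, hJ, hJsum⟩ := exists_card_eq_mul_sum_le_max_mul W (fun j => sq_nonneg (c j))
    (hΔ ▸ Finset.card_le_univ Δ)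
  refine min_sqrt_div_le (RIC_nonneg Φ L) W.card.cast_nonneg B.cast_nonneg
    (le_of_mul_le_mul_right ?_ (dotProduct_self_pos hu0))
  calc (B : ℝ) * (1 - δ) ^ 2 * U = B * ((1 - δ) ^ 2 * U) := by ring
    _ ≤ B * ∑ j ∈ W, c j ^ 2 := by gcongr
    _ ≤ max (B : ℝ) W.card * ∑ j ∈ J, c j ^ 2 := hJsum
    _ ≤ max (B : ℝ) W.card * ∑ j ∈ Δ, c j ^ 2 :=
          mul_le_mul_of_nonneg_left (hmax J hJ) (by positivity)
    _ ≤ max (B : ℝ) W.card * (δ ^ 2 * U) := by gcongr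
    _ = max (B : ℝ) W.card * δ ^ 2 * U := by ring

theorem stmt_6_general {M N : ℕ} (Φ : Matrix (Fin M) (Fin N) ℝ)
    (x : Fin N → ℝ) (T : Finset (Fin N)) (hT : ∀ j, j ∈ T ↔ x j ≠ 0)
    (K : ℕ) (hK : T.card = K)
    (y : Fin M → ℝ) (hy : y = Φ.mulVec x)
    (Tb : Finset (Fin N)) (n_c n_f : ℕ)
    (hnc : (Tb ∩ T).card = n_c) (hnf : (Tb \ T).card = n_f) (hncK : n_c < K)
    (xhat : {j // j ∈ Tb} → ℝ)
    (hxhat : ∀ z : {j // j ∈ Tb} → ℝ,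
      _root_.enorm (y - (colSub Φ Tb).mulVec xhat) ≤ _root_.enorm (y - (colSub Φ Tb).mulVec z))
    (rb : Fin M → ℝ) (hrb : rb = y - (colSub Φ Tb).mulVec xhat)
    (B : ℕ)
    (ΔT : Finset (Fin N)) (hcard : ΔT.card = B)
    (hmax : ∀ J : Finset (Fin N), J.card = B →
      ∑ j ∈ J, (∑ i, Φ i j * rb i) ^ 2 ≤ ∑ j ∈ ΔT, (∑ i, Φ i j * rb i) ^ 2)
    (hδ : RIC Φ (K + n_f + B)
      < min (Real.sqrt B / (Real.sqrt ((K : ℝ) - n_c) + Real.sqrt B)) (1 / 2)) :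
    (ΔT ∩ (T \ Tb)).Nonempty := by
  by_contra hmiss
  set u : Fin N → ℝ := x - fun j => if h : j ∈ Tb then xhat ⟨j, h⟩ else 0
  have hrbu : rb = Φ *ᵥ u := by rw [hrb, hy, colSub_mulVec, mulVec_sub]
  have huW : ∀ j ∈ T \ Tb, u j = x j := fun j hj => by
    simp [u, (Finset.mem_sdiff.mp hj).2]
  have hu : ∀ j ∉ T ∪ Tb, u j = 0 := fun j hj => by
    rw [Finset.mem_union, not_or] at hj
    simp [u, hj.2, not_not.mp (mt (hT j).mpr hj.1)]
  have hW : (T \ Tb).card + n_c = K := by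
    rw [← hK, ← hnc, Finset.inter_comm, Finset.card_sdiff_add_card_inter]
  have hu0 : u ≠ 0 := by
    obtain ⟨j, hj⟩ := Finset.card_pos.mp (show 0 < (T \ Tb).card by omega)
    exact fun h => (hT j).mp (Finset.mem_sdiff.mp hj).1 (by rw [← huW j hj, h, Pi.zero_apply])
  have hs : (T ∪ Tb).card = K + n_f := by
    rw [← hK, ← hnf, Finset.union_comm, ← Finset.card_sdiff_add_card, add_comm]
  have hc : ∀ j ∈ T ∪ Tb, j ∉ T \ Tb → (Φᵀ *ᵥ rb) j = 0 := fun j hj hjW => by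
    have hjTb : j ∈ Tb := by simp only [Finset.mem_union, Finset.mem_sdiff] at hj hjW; tauto
    rw [mulVec_transpose, hrb]
    exact congrFun (vecMul_sub_mulVec_eq_zero_of_forall_enorm_le hxhat) ⟨j, hjTb⟩
  have hdisj : Disjoint ΔT (T \ Tb) :=
    Finset.disjoint_iff_inter_eq_empty.mpr (Finset.not_nonempty_iff_eq_empty.mp hmiss)
  subst hrbu
  have hbound := min_sqrt_div_le_RIC_of_disjoint (L := K + n_f + B) hu hu0 hc hdisj hcard
    (by omega) hmax
  rw [show ((T \ Tb).card : ℝ) = K - n_c by rw [← hW]; push_cast; ring] at hbound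
  exact hbound.not_gt hδ

theorem stmt_6 {M N : ℕ} (Φ : Matrix (Fin M) (Fin N) ℝ)
    (x : Fin N → ℝ) (T : Finset (Fin N)) (hT : ∀ j, j ∈ T ↔ x j ≠ 0)
    (K : ℕ) (hK : T.card = K)
    (y : Fin M → ℝ) (hy : y = Φ.mulVec x)
    (Tb : Finset (Fin N)) (n_c n_f : ℕ)
    (hnc : (Tb ∩ T).card = n_c) (hnf : (Tb \ T).card = n_f) (hncK : n_c < K)
    (xhat : {j // j ∈ Tb} → ℝ)
    (hxhat : ∀ z : {j // j ∈ Tb} → ℝ,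
      _root_.enorm (y - (colSub Φ Tb).mulVec xhat) ≤ _root_.enorm (y - (colSub Φ Tb).mulVec z))
    (rb : Fin M → ℝ) (hrb : rb = y - (colSub Φ Tb).mulVec xhat)
    (B : ℕ) (hB : 0 < B) (hN : K + n_f + B ≤ N)
    (ΔT : Finset (Fin N)) (hcard : ΔT.card = B)
    (hmax : ∀ J : Finset (Fin N), J.card = B →
      ∑ j ∈ J, (∑ i, Φ i j * rb i) ^ 2 ≤ ∑ j ∈ ΔT, (∑ i, Φ i j * rb i) ^ 2)
    (hδ : RIC Φ (K + n_f + B)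
      < min (Real.sqrt B / (Real.sqrt ((K : ℝ) - n_c) + Real.sqrt B)) (1 / 2)) :
    (ΔT ∩ (T \ Tb)).Nonempty :=
  stmt_6_general Φ x T hT K hK y hy Tb n_c n_f hnc hnf hncK xhat hxhat rb hrb B ΔT hcard hmax hδ
end

section
/- Let K and B be positive integers and n_f a nonnegative integer with 1 ≤ n_f + B ≤ ⌈K/2⌉, and let Φ ∈ ℝ^{M×N} with 3⌈K/2⌉ ≤ N. If the restricted isometry constant of Φ satisfies δ_{K+n_f+B} ≥ 3√B/(√K+√B), then δ_{K+B} > √B/(√K+√B). -/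
/-! An RIC `δ` of order `2t` is an RIC `2δ` of order `3t`: split a `3t`-sparse `x` into three
`t`-sparse pieces `a, b, c` with disjoint supports. The polarization identity
`4‖Φ(a+b+c)‖² = 3 ∑ ‖Φ(a+b)‖² - ∑ ‖Φ(a-b)‖²` involves only `2t`-sparse vectors, and
`‖a ± b‖² = ‖a‖² + ‖b‖²`, so `δ_{3t} ≤ 2 δ_{2t}`. With `t = ⌈K/2⌉` monotonicity in the order gives
`δ_{K+n_f+B} ≤ δ_{3t} ≤ 2 δ_{2t} ≤ 2 δ_{K+B}`, so `δ_{K+B} ≤ √B/(√K+√B)` would force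
`δ_{K+n_f+B} ≤ 2√B/(√K+√B) < 3√B/(√K+√B)`. -/

open scoped BigOperators
open Matrix

open scoped RealInnerProductSpace
open WithLp

theorem four_mul_norm_add_add_sq {F : Type*} [NormedAddCommGroup F] [InnerProductSpace ℝ F]
    (a b c : F) :
    4 * ‖a + b + c‖ ^ 2 = 3 * (‖a + b‖ ^ 2 + ‖a + c‖ ^ 2 + ‖b + c‖ ^ 2) -
      (‖a - b‖ ^ 2 + ‖a - c‖ ^ 2 + ‖b - c‖ ^ 2) := by
  simp only [norm_add_sq_real, norm_sub_sq_real, inner_add_left]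
  ring

theorem LinearMap.sq_norm_map_add_add_bounds {E F : Type*} [NormedAddCommGroup E]
    [InnerProductSpace ℝ E] [NormedAddCommGroup F] [InnerProductSpace ℝ F] (T : E →ₗ[ℝ] F)
    {δ : ℝ} {a b c : E} (hab : ⟪a, b⟫ = 0) (hac : ⟪a, c⟫ = 0) (hbc : ⟪b, c⟫ = 0)
    (hT : ∀ y ∈ ({a + b, a - b, a + c, a - c, b + c, b - c} : Set E),
      (1 - δ) * ‖y‖ ^ 2 ≤ ‖T y‖ ^ 2 ∧ ‖T y‖ ^ 2 ≤ (1 + δ) * ‖y‖ ^ 2) :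
    (1 - 2 * δ) * ‖a + b + c‖ ^ 2 ≤ ‖T (a + b + c)‖ ^ 2 ∧
      ‖T (a + b + c)‖ ^ 2 ≤ (1 + 2 * δ) * ‖a + b + c‖ ^ 2 := by
  have hid := four_mul_norm_add_add_sq (T a) (T b) (T c)
  simp only [← map_add, ← map_sub] at hid
  obtain ⟨h₁, h₁'⟩ := hT (a + b) (by simp)
  obtain ⟨h₂, h₂'⟩ := hT (a - b) (by simp)
  obtain ⟨h₃, h₃'⟩ := hT (a + c) (by simp)
  obtain ⟨h₄, h₄'⟩ := hT (a - c) (by simp)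
  obtain ⟨h₅, h₅'⟩ := hT (b + c) (by simp)
  obtain ⟨h₆, h₆'⟩ := hT (b - c) (by simp)
  simp only [norm_add_sq_real, norm_sub_sq_real, inner_add_left, hab, hac, hbc] at *
  constructor <;> linarith

section Sparse

variable {N : ℕ} {a b : ℕ} {x y : Fin N → ℝ}

theorem SparseLe.mono (hx : SparseLe a x) (hab : a ≤ b) : SparseLe b x :=
  le_trans hx hab

theorem SparseLe.add (hx : SparseLe a x) (hy : SparseLe b y) : SparseLe (a + b) (x + y) := by
  refine le_trans (Finset.card_le_card fun i hi => ?_) ((Finset.card_union_le _ _).trans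
    (add_le_add hx hy))
  simp only [Finset.mem_union, Finset.mem_filter, Finset.mem_univ, true_and, Pi.add_apply] at hi ⊢
  by_contra! h
  simp [h] at hi

theorem SparseLe.neg (hx : SparseLe a x) : SparseLe a (-x) := by
  simpa [SparseLe] using hx

theorem SparseLe.sub (hx : SparseLe a x) (hy : SparseLe b y) : SparseLe (a + b) (x - y) := by
  simpa only [sub_eq_add_neg] using hx.add hy.neg

theorem SparseLe.exists_indicator_split (hx : SparseLe (a + b) x) :
    ∃ s : Set (Fin N), SparseLe a (s.indicator x) ∧ SparseLe b (sᶜ.indicator x) := by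
  set S := Finset.univ.filter fun i => x i ≠ 0
  obtain ⟨u, huS, hu⟩ := Finset.exists_subset_card_eq (min_le_right a S.card)
  refine ⟨u, le_trans (Finset.card_le_card fun i hi => ?_) (hu.trans_le (min_le_left _ _)),
    le_trans (Finset.card_le_card (t := S \ u) fun i hi => ?_) ?_⟩
  · simp only [Finset.mem_filter, Finset.mem_univ, true_and, ne_eq,
      Set.indicator_apply_eq_zero, SetLike.mem_coe, Classical.not_imp] at hi
    exact hi.1
  · by_cases h : i ∈ u
    · simp [h] at hi
    · simp_all [S]
  · rw [Finset.card_sdiff_of_subset huS, hu]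
    have : S.card ≤ a + b := hx
    omega

end Sparse

theorem EuclideanSpace.norm_toLp_sq {ι : Type*} [Fintype ι] (v : ι → ℝ) :
    ‖(toLp 2 v : EuclideanSpace ℝ ι)‖ ^ 2 = ∑ i, v i ^ 2 := by
  simp [EuclideanSpace.real_norm_sq_eq]

section RIP

variable {M N : ℕ} (Φ : Matrix (Fin M) (Fin N) ℝ)

def IsRIPConst (L : ℕ) (δ : ℝ) : Prop :=
  ∀ x : EuclideanSpace ℝ (Fin N), SparseLe L x.ofLp →
    (1 - δ) * ‖x‖ ^ 2 ≤ ‖Matrix.toLpLin 2 2 Φ x‖ ^ 2 ∧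
      ‖Matrix.toLpLin 2 2 Φ x‖ ^ 2 ≤ (1 + δ) * ‖x‖ ^ 2

theorem RIC_eq_sInf (L : ℕ) : RIC Φ L = sInf {δ | 0 ≤ δ ∧ IsRIPConst Φ L δ} := by
  simp only [RIC, IsRIPConst, (WithLp.toLp_surjective 2).forall, Matrix.toLpLin_toLp,
    Matrix.toLin'_apply, EuclideanSpace.norm_toLp_sq]

theorem exists_isRIPConst (L : ℕ) : ∃ δ, 0 ≤ δ ∧ IsRIPConst Φ L δ := by
  set T := LinearMap.toContinuousLinearMap (Matrix.toLpLin 2 2 Φ)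
  refine ⟨‖T‖ ^ 2 + 1, by positivity, fun x _ => ⟨?_, ?_⟩⟩
  · nlinarith [sq_nonneg ‖T‖, sq_nonneg ‖x‖, sq_nonneg ‖Matrix.toLpLin 2 2 Φ x‖]
  · have hT : ‖Matrix.toLpLin 2 2 Φ x‖ ≤ ‖T‖ * ‖x‖ := T.le_opNorm x
    have := pow_le_pow_left₀ (norm_nonneg _) hT 2
    nlinarith [sq_nonneg ‖x‖]

theorem isClosed_setOf_isRIPConst (L : ℕ) : IsClosed {δ | 0 ≤ δ ∧ IsRIPConst Φ L δ} := by
  simp only [IsRIPConst, Set.ofPred_and, Set.ofPred_forall]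
  exact (isClosed_le continuous_const continuous_id).inter <| isClosed_iInter fun x =>
    isClosed_iInter fun _ => (isClosed_le (by fun_prop) continuous_const).inter
      (isClosed_le continuous_const (by fun_prop))

theorem RIC_mem_s8 (L : ℕ) : RIC Φ L ∈ {δ | 0 ≤ δ ∧ IsRIPConst Φ L δ} := by
  rw [RIC_eq_sInf]
  exact (isClosed_setOf_isRIPConst Φ L).csInf_mem (exists_isRIPConst Φ L) ⟨0, fun _ h => h.1⟩

theorem RIC_le {L : ℕ} {δ : ℝ} (hδ : 0 ≤ δ) (h : IsRIPConst Φ L δ) : RIC Φ L ≤ δ := by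
  rw [RIC_eq_sInf]
  exact csInf_le ⟨0, fun _ h => h.1⟩ ⟨hδ, h⟩

theorem IsRIPConst.mono {L L' : ℕ} {δ : ℝ} (h : IsRIPConst Φ L δ) (hL : L' ≤ L) :
    IsRIPConst Φ L' δ :=
  fun x hx => h x (hx.mono hL)

theorem RIC_mono {L L' : ℕ} (hL : L' ≤ L) : RIC Φ L' ≤ RIC Φ L :=
  RIC_le Φ (RIC_mem_s8 Φ L).1 ((RIC_mem_s8 Φ L).2.mono Φ hL)

end RIP

theorem EuclideanSpace.inner_toLp_indicator_of_disjoint {ι : Type*} [Fintype ι] {s u : Set ι}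
    (h : Disjoint s u) (f g : ι → ℝ) :
    ⟪(toLp 2 (s.indicator f) : EuclideanSpace ℝ ι), toLp 2 (u.indicator g)⟫ = 0 := by
  rw [EuclideanSpace.inner_toLp_toLp]
  refine Finset.sum_eq_zero fun i _ => ?_
  rw [star_trivial, ← Set.inter_indicator_mul, h.symm.inter_eq, Set.indicator_empty]

theorem IsRIPConst.three_mul {M N : ℕ} {Φ : Matrix (Fin M) (Fin N) ℝ} {t : ℕ} {δ : ℝ}
    (h : IsRIPConst Φ (2 * t) δ) : IsRIPConst Φ (3 * t) (2 * δ) := by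
  intro x hx
  obtain ⟨s, hs, hsc⟩ := SparseLe.exists_indicator_split (a := t) (b := t + t)
    (hx.mono (by omega))
  obtain ⟨u, hu, huc⟩ := hsc.exists_indicator_split
  rw [Set.indicator_indicator] at hu huc
  set v := x.ofLp
  set x₁ : EuclideanSpace ℝ (Fin N) := toLp 2 (s.indicator v)
  set x₂ : EuclideanSpace ℝ (Fin N) := toLp 2 ((u ∩ sᶜ).indicator v)
  set x₃ : EuclideanSpace ℝ (Fin N) := toLp 2 ((uᶜ ∩ sᶜ).indicator v)
  have hsum : x₁ + x₂ + x₃ = x := by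
    have hv : s.indicator v + ((u ∩ sᶜ).indicator v + (uᶜ ∩ sᶜ).indicator v) = v := by
      rw [← Set.indicator_indicator, ← Set.indicator_indicator, Set.indicator_self_add_compl,
        Set.indicator_self_add_compl]
    rw [add_assoc, ← WithLp.toLp_add, ← WithLp.toLp_add, hv]
  rw [← hsum]
  refine LinearMap.sq_norm_map_add_add_bounds _
    (EuclideanSpace.inner_toLp_indicator_of_disjoint
      (disjoint_compl_right.mono_right Set.inter_subset_right) _ _)
    (EuclideanSpace.inner_toLp_indicator_of_disjoint
      (disjoint_compl_right.mono_right Set.inter_subset_right) _ _)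
    (EuclideanSpace.inner_toLp_indicator_of_disjoint
      (disjoint_compl_right.mono Set.inter_subset_left Set.inter_subset_left) _ _)
    fun y hy => h y ?_
  rw [two_mul]
  rcases hy with rfl | rfl | rfl | rfl | rfl | rfl
  exacts [hs.add hu, hs.sub hu, hs.add huc, hs.sub huc, hu.add huc, hu.sub huc]

theorem RIC_three_mul_le {M N : ℕ} (Φ : Matrix (Fin M) (Fin N) ℝ) (t : ℕ) :
    RIC Φ (3 * t) ≤ 2 * RIC Φ (2 * t) :=
  RIC_le Φ (mul_nonneg zero_le_two (RIC_mem_s8 Φ _).1) (RIC_mem_s8 Φ _).2.three_mul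

theorem stmt_8_general {M N : ℕ} (Φ : Matrix (Fin M) (Fin N) ℝ) (K B n_f : ℕ)
    (hB : 0 < B)
    (h2 : n_f + B ≤ (K + 1) / 2)
    (hδ : 3 * Real.sqrt B / (Real.sqrt K + Real.sqrt B) ≤ RIC Φ (K + n_f + B)) :
    RIC Φ (K + B) > Real.sqrt B / (Real.sqrt K + Real.sqrt B) := by
  set t := (K + 1) / 2
  have hRIC : RIC Φ (K + n_f + B) ≤ 2 * RIC Φ (K + B) :=
    calc RIC Φ (K + n_f + B) ≤ RIC Φ (3 * t) := RIC_mono Φ (by omega)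
      _ ≤ 2 * RIC Φ (2 * t) := RIC_three_mul_le Φ t
      _ ≤ 2 * RIC Φ (K + B) := by gcongr; exact RIC_mono Φ (by omega)
  have hsqrtB : 0 < Real.sqrt B := Real.sqrt_pos.2 (by exact_mod_cast hB)
  have hpos : 0 < Real.sqrt B / (Real.sqrt K + Real.sqrt B) :=
    div_pos hsqrtB (add_pos_of_nonneg_of_pos (Real.sqrt_nonneg _) hsqrtB)
  rw [mul_div_assoc] at hδ
  linarith

theorem stmt_8 {M N : ℕ} (Φ : Matrix (Fin M) (Fin N) ℝ) (K B n_f : ℕ)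
    (hK : 0 < K) (hB : 0 < B)
    (h1 : 1 ≤ n_f + B) (h2 : n_f + B ≤ (K + 1) / 2)
    (hN : 3 * ((K + 1) / 2) ≤ N)
    (hδ : 3 * Real.sqrt B / (Real.sqrt K + Real.sqrt B) ≤ RIC Φ (K + n_f + B)) :
    RIC Φ (K + B) > Real.sqrt B / (Real.sqrt K + Real.sqrt B) :=
  stmt_8_general Φ K B n_f hB h2 hδ
end

section
/- Let Φ ∈ ℝ^{M×N} be full spark, i.e., every set of at most M columns of Φ is linearly independent. Let x ∈ ℝ^N have support T with |T| = K, and set y = Φx. Let S ⊆ {1,…,N} be a nonempty index set with |S| ≤ M − K, and let ẑ minimize ‖y − Φ_S z‖₂ over z ∈ ℝ^{|S|}. Then the residue y − Φ_S ẑ is zero if and only if T ⊆ S. -/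
open scoped BigOperators
open Matrix

/-- `Φ` is full spark: every set of at most `M` columns is linearly independent. -/
def FullSpark {M N : ℕ} (Φ : Matrix (Fin M) (Fin N) ℝ) : Prop :=
  ∀ S : Finset (Fin N), S.card ≤ M →
    LinearIndependent ℝ (fun j : {j // j ∈ S} => fun i => Φ i j.val)

/-!
If `Φ_S ẑ = y = Φ x`, then `x` minus the zero extension of `ẑ` lies in the kernel of `Φ` and is
supported on `T ∪ S`, which has at most `M` elements; full spark forces it to vanish, so the
support `T` of `x` lies in `S`. Conversely, if `T ⊆ S` then `x` restricted to `S` has zero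
residual, hence so does the minimizer `ẑ`.
-/

lemma enorm_nonneg {ι : Type*} [Fintype ι] (v : ι → ℝ) : 0 ≤ _root_.enorm v :=
  Real.sqrt_nonneg _

lemma enorm_eq_zero_iff {ι : Type*} [Fintype ι] {v : ι → ℝ} : _root_.enorm v = 0 ↔ v = 0 := by
  rw [_root_.enorm, Real.sqrt_eq_zero (Finset.sum_nonneg fun i _ => sq_nonneg _),
    Finset.sum_eq_zero_iff_of_nonneg fun i _ => sq_nonneg _, funext_iff]
  simp

lemma eq_zero_of_enorm_le_of_eq_zero {α ι : Type*} [Fintype ι] {f : α → ι → ℝ} {a b : α}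
    (hmin : _root_.enorm (f a) ≤ _root_.enorm (f b)) (hb : f b = 0) : f a = 0 :=
  enorm_eq_zero_iff.mp <| le_antisymm (by simpa [enorm_eq_zero_iff.mpr hb] using hmin)
    (enorm_nonneg _)

section ColumnSubmatrix

variable {M N : ℕ} (Φ : Matrix (Fin M) (Fin N) ℝ)

def extendByZero (S : Finset (Fin N)) (z : {j // j ∈ S} → ℝ) : Fin N → ℝ :=
  fun j => if h : j ∈ S then z ⟨j, h⟩ else 0

lemma extendByZero_of_notMem {S : Finset (Fin N)} (z : {j // j ∈ S} → ℝ) {j : Fin N}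
    (hj : j ∉ S) : extendByZero S z j = 0 :=
  dif_neg hj

lemma extendByZero_restrict {S : Finset (Fin N)} {w : Fin N → ℝ} (hw : ∀ j ∉ S, w j = 0) :
    extendByZero S (fun j => w j) = w := by
  funext j
  by_cases hj : j ∈ S
  · exact dif_pos hj
  · rw [extendByZero_of_notMem _ hj, hw j hj]

lemma colSub_mulVec_s13 (S : Finset (Fin N)) (z : {j // j ∈ S} → ℝ) :
    (colSub Φ S).mulVec z = Φ.mulVec (extendByZero S z) := by
  funext i
  simp only [Matrix.mulVec, dotProduct, colSub, Matrix.of_apply]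
  rw [← Finset.sum_subset (Finset.subset_univ S) fun j _ hj => by
      rw [extendByZero_of_notMem _ hj, mul_zero],
    ← Finset.sum_coe_sort S]
  exact Finset.sum_congr rfl fun j _ => by rw [extendByZero, dif_pos j.2]

variable {Φ}

lemma FullSpark.injective_colSub_mulVec (hΦ : FullSpark Φ) {U : Finset (Fin N)}
    (hU : U.card ≤ M) : Function.Injective (colSub Φ U).mulVec :=
  Matrix.mulVec_injective_iff.mpr (hΦ U hU)

lemma FullSpark.eq_zero_of_mulVec_eq_zero (hΦ : FullSpark Φ) {U : Finset (Fin N)}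
    (hU : U.card ≤ M) {w : Fin N → ℝ} (hw : ∀ j ∉ U, w j = 0) (h : Φ.mulVec w = 0) :
    w = 0 := by
  have hrestrict : (fun j : {j // j ∈ U} => w j) = 0 :=
    hΦ.injective_colSub_mulVec hU <| by
      rw [colSub_mulVec_s13, extendByZero_restrict hw, h, Matrix.mulVec_zero]
  rw [← extendByZero_restrict hw, hrestrict]
  exact extendByZero_restrict (w := 0) fun _ _ => rfl

end ColumnSubmatrix

theorem stmt_13_general {M N : ℕ} (Φ : Matrix (Fin M) (Fin N) ℝ) (hΦ : FullSpark Φ)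
    (x : Fin N → ℝ) (T : Finset (Fin N)) (hT : ∀ j, j ∈ T ↔ x j ≠ 0)
    (K : ℕ) (hK : T.card = K)
    (y : Fin M → ℝ) (hy : y = Φ.mulVec x)
    (S : Finset (Fin N)) (hSM : S.card + K ≤ M)
    (zhat : {j // j ∈ S} → ℝ)
    (hzhat : ∀ z : {j // j ∈ S} → ℝ,
      _root_.enorm (y - (colSub Φ S).mulVec zhat) ≤ _root_.enorm (y - (colSub Φ S).mulVec z)) :
    y - (colSub Φ S).mulVec zhat = 0 ↔ T ⊆ S := by
  have hx : ∀ j ∉ T, x j = 0 := fun j hj => not_not.mp (mt (hT j).mpr hj)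
  constructor
  · intro hres
    have hcard : (T ∪ S).card ≤ M :=
      (Finset.card_union_le T S).trans (by omega)
    have hdiff : x - extendByZero S zhat = 0 := by
      refine hΦ.eq_zero_of_mulVec_eq_zero hcard (fun j hj => ?_) ?_
      · rw [Finset.mem_union, not_or] at hj
        rw [Pi.sub_apply, hx j hj.1, extendByZero_of_notMem _ hj.2, sub_zero]
      · rw [Matrix.mulVec_sub, ← colSub_mulVec_s13, ← hy, hres]
    intro j hjT
    by_contra hjS
    have hxj := congrFun hdiff j
    rw [Pi.sub_apply, extendByZero_of_notMem _ hjS, sub_zero] at hxj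
    exact (hT j).mp hjT hxj
  · intro hTS
    refine eq_zero_of_enorm_le_of_eq_zero (hzhat fun j => x j) ?_
    rw [colSub_mulVec_s13, extendByZero_restrict fun j hj => hx j (mt (@hTS j) hj), hy, sub_self]

theorem stmt_13 {M N : ℕ} (Φ : Matrix (Fin M) (Fin N) ℝ) (hΦ : FullSpark Φ)
    (x : Fin N → ℝ) (T : Finset (Fin N)) (hT : ∀ j, j ∈ T ↔ x j ≠ 0)
    (K : ℕ) (hK : T.card = K)
    (y : Fin M → ℝ) (hy : y = Φ.mulVec x)
    (S : Finset (Fin N)) (hS : S.Nonempty) (hSM : S.card + K ≤ M)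
    (zhat : {j // j ∈ S} → ℝ)
    (hzhat : ∀ z : {j // j ∈ S} → ℝ,
      _root_.enorm (y - (colSub Φ S).mulVec zhat) ≤ _root_.enorm (y - (colSub Φ S).mulVec z)) :
    y - (colSub Φ S).mulVec zhat = 0 ↔ T ⊆ S :=
  stmt_13_general Φ hΦ x T hT K hK y hy S hSM zhat hzhat
end
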